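/- Let k, r, s ∈ ℕ. In the ring ℚ⟦q⟧⟦X⟧ of formal power series, exp( Σ_{n≥1} ((−1)^{n+1}/n) · ℬ_{1,nk,nr,ns}(q) · X^n ) = Σ_{j≥0} ℬ_{j,k,r,s}(q) · X^j, where ℬ_{0,k,r,s}(q) := 1. In particular, for each a ∈ ℕ, ℬ_{a,k,r,s} is a polynomial of degree at most a, with rational coefficients, in the series ℬ_{1,nk,nr,ns} for 1 ≤ n ≤ a. -/

import Mathlib

open PowerSeries Finset
open scoped Classical

noncomputable section

/-- `(1 - q^n)^(-k)` in `ℚ⟦q⟧`, for `k : ℤ` (for negative `k` this is the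
power `(1 - q^n)^{|k|}`). -/
def dFac (n : ℕ) (k : ℤ) : PowerSeries ℚ :=
  if 0 ≤ k then ((1 - (X : PowerSeries ℚ) ^ n)⁻¹) ^ k.toNat
  else (1 - (X : PowerSeries ℚ) ^ n) ^ (-k).toNat

/-- Strictly increasing `a`-tuples `1 ≤ n₁ < n₂ < ⋯ < n_a ≤ N`. -/
def strictTuples (a N : ℕ) : Finset (Fin a → ℕ) :=
  (Fintype.piFinset fun _ : Fin a => Finset.Icc 1 N).filter fun f => StrictMono f

/-- The coefficient `d_{a,k,r,s}(N)` of `q^N` in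
`ℬ_{a,k,r,s}(q) = Σ_{1≤n₁<⋯<n_a} q^{r(n₁²+⋯+n_a²)+s(n₁+⋯+n_a)} / ∏_j (1-q^{n_j})^k`.
Since `r, s ≥ 1`, tuples containing an entry `> N` contribute `0` to the coefficient of `q^N`,
so the (q-adically convergent) infinite sum can be truncated to entries in `[1, N]`. -/
def Bcoeff (a : ℕ) (k : ℤ) (r s : ℕ) (N : ℕ) : ℚ :=
  ∑ f ∈ strictTuples a N,
    PowerSeries.coeff (R := ℚ) N
      ((X : PowerSeries ℚ) ^ (r * (∑ j, (f j) ^ 2) + s * ∑ j, f j) * ∏ j, dFac (f j) k)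

/-- The exponential of a power series `f ∈ ℚ⟦q⟧⟦X⟧` with zero constant term (in `X`):
`exp f = Σ_{m≥0} f^m / m!`.  Since `f` has no constant term, `f^m` has `X`-order at least
`m`, so the coefficient of `X^j` only involves `f^m` for `m ≤ j`. -/
def expX (f : PowerSeries (PowerSeries ℚ)) : PowerSeries (PowerSeries ℚ) :=
  PowerSeries.mk fun j => ∑ m ∈ Finset.range (j + 1),
    ((m.factorial : ℚ)⁻¹) • (PowerSeries.coeff (R := PowerSeries ℚ) j (f ^ m))

/-- The power series `ℬ_{a,k,r,s}(q) ∈ ℚ⟦q⟧`; note `ℬ_{0,k,r,s} = 1`. -/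
def Bser (a : ℕ) (k : ℤ) (r s : ℕ) : PowerSeries ℚ := PowerSeries.mk (Bcoeff a k r s)

/-! The series `ℬ_{a,k,r,s}` is the `a`-th elementary symmetric function of the infinitely
many series `t_m = q^{rm²+sm} (1-q^m)^{-k}` (`Bterm k r s m`), and `ℬ_{1,nk,nr,ns}` is their
`n`-th power sum. Since `q^m ∣ t_m`, modulo `q^{N+1}` only `t_1, …, t_N` matter, so Newton's
identities for finitely many variables give
`(n+1) ℬ_{n+1} = Σ_{i+j=n} (-1)^j ℬ_i ℬ_{1,(j+1)k,(j+1)r,(j+1)s}`.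
This says that `E = Σ ℬ_j Xʲ` satisfies `E' = E L'` for the series `L` inside the exponential,
and `exp L` is the unique solution with constant term `1`. The same recursion expresses `ℬ_a`
as a polynomial of degree `≤ a` in the `ℬ_{1,nk,nr,ns}`. -/

-- Stated over a general `R`: at `R = ℚ⟦X⟧`, rewriting with `Derivation.leibniz` runs into a
-- mismatch between two `Algebra ℚ⟦X⟧ ℚ⟦X⟧⟦X⟧` instances.
theorem PowerSeries.derivative_mul {R : Type*} [CommSemiring R] (a b : PowerSeries R) :
    d⁄dX R (a * b) = a * d⁄dX R b + b * d⁄dX R a := by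
  rw [Derivation.leibniz, smul_eq_mul, smul_eq_mul]

section ExpX

variable {f g : PowerSeries (PowerSeries ℚ)}

theorem expX_eq_subst_exp (hf : constantCoeff f = 0) :
    expX f = (exp (PowerSeries ℚ)).subst f := by
  ext1 j
  rw [expX, coeff_mk, coeff_subst' (HasSubst.of_constantCoeff_zero' hf),
    finsum_eq_sum_of_support_subset _ (s := range (j + 1))]
  · refine sum_congr rfl fun m _ => ?_
    rw [coeff_exp, algebra_compatible_smul (PowerSeries ℚ), one_div]
  · intro m hm
    rw [Function.mem_support] at hm
    rw [coe_range, Set.mem_Iio, Nat.lt_succ_iff]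
    by_contra! hjm
    refine hm ?_
    rw [X_pow_dvd_iff.mp (pow_dvd_pow_of_dvd (X_dvd_iff.mpr hf) m) j hjm, smul_zero]

theorem derivative_expX (hf : constantCoeff f = 0) :
    d⁄dX _ (expX f) = expX f * d⁄dX _ f := by
  rw [expX_eq_subst_exp hf, derivative_subst (HasSubst.of_constantCoeff_zero' hf),
    derivative_exp]

theorem constantCoeff_expX : constantCoeff (expX f) = 1 := by
  rw [← coeff_zero_eq_constantCoeff_apply, expX, coeff_mk]
  simp

theorem mul_expX_neg_eq_one (hf : constantCoeff f = 0) (hg : d⁄dX _ g = g * d⁄dX _ f)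
    (hg₀ : constantCoeff g = 1) : g * expX (-f) = 1 := by
  have : IsAddTorsionFree (PowerSeries ℚ) := .of_module_rat _
  have hf' : constantCoeff (-f) = 0 := by rw [map_neg, hf, neg_zero]
  refine derivative.ext ?_ (by rw [map_mul, hg₀, constantCoeff_expX, one_mul, map_one])
  rw [derivative_mul, derivative_expX hf', hg, derivative_one, map_neg]
  ring

theorem eq_expX_of_derivative_eq (hf : constantCoeff f = 0) (hg : d⁄dX _ g = g * d⁄dX _ f)
    (hg₀ : constantCoeff g = 1) : g = expX f :=
  calc g = g * (expX f * expX (-f)) := by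
        rw [mul_expX_neg_eq_one hf (derivative_expX hf) constantCoeff_expX, mul_one]
    _ = expX f * (g * expX (-f)) := by ring
    _ = expX f := by rw [mul_expX_neg_eq_one hf hg hg₀, mul_one]

end ExpX

theorem PowerSeries.quotient_mk_span_X_pow_eq_iff {R : Type*} [CommRing R] {N : ℕ}
    {x y : PowerSeries R} :
    Ideal.Quotient.mk (Ideal.span {X ^ N}) x = Ideal.Quotient.mk (Ideal.span {X ^ N}) y ↔
      ∀ M < N, coeff M x = coeff M y := by
  simp only [Ideal.Quotient.eq, Ideal.mem_span_singleton, X_pow_dvd_iff, map_sub, sub_eq_zero]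

theorem PowerSeries.eq_of_forall_quotient_mk_span_X_pow_eq {R : Type*} [CommRing R]
    {x y : PowerSeries R} (h : ∀ N, Ideal.Quotient.mk (Ideal.span {X ^ (N + 1)}) x =
      Ideal.Quotient.mk (Ideal.span {X ^ (N + 1)}) y) : x = y :=
  ext fun N => quotient_mk_span_X_pow_eq_iff.mp (h N) N N.lt_succ_self

theorem MvPolynomial.esymm_succ_mul_eq_sum (σ R : Type*) [Fintype σ] [CommRing R] (n : ℕ) :
    esymm σ R (n + 1) * (n + 1) =
      ∑ p ∈ antidiagonal n, esymm σ R p.1 * ((-1) ^ p.2 * psum σ R (p.2 + 1)) := by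
  rw [mul_comm, ← Nat.cast_add_one, mul_esymm_eq_sum, sum_filter,
    Nat.sum_antidiagonal_succ', if_neg (lt_irrefl _), zero_add, mul_sum]
  refine sum_congr rfl fun p hp => ?_
  rw [HasAntidiagonal.mem_antidiagonal] at hp
  have hsign : (-1 : MvPolynomial σ R) ^ (n + 1 + 1) * (-1) ^ p.1 = (-1) ^ p.2 := by
    rw [← pow_add, show n + 1 + 1 + p.1 = p.2 + 2 * (p.1 + 1) by omega, pow_add, pow_mul,
      neg_one_sq, one_pow, mul_one]
  rw [if_pos (by omega)]
  linear_combination esymm σ R p.1 * psum σ R (p.2 + 1) * hsign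

theorem mem_strictTuples {a N : ℕ} {f : Fin a → ℕ} :
    f ∈ strictTuples a N ↔ (∀ j, f j ∈ Icc 1 N) ∧ StrictMono f := by
  simp [strictTuples, Fintype.mem_piFinset]

theorem sum_strictTuples_prod {R : Type*} [CommSemiring R] (a N : ℕ) (g : ℕ → R) :
    ∑ f ∈ strictTuples a N, ∏ j, g (f j) = ∑ S ∈ powersetCard a (Icc 1 N), ∏ m ∈ S, g m := by
  refine sum_bij' (fun f _ => univ.image f)
    (fun S hS => S.orderEmbOfFin (mem_powersetCard.1 hS).2)
    (fun f hf => ?_) (fun S hS => ?_) (fun f hf => ?_) (fun S hS => ?_) (fun f hf => ?_)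
  · obtain ⟨hmem, hmono⟩ := mem_strictTuples.1 hf
    rw [mem_powersetCard, card_image_of_injective _ hmono.injective, card_univ, Fintype.card_fin]
    exact ⟨fun m hm => by obtain ⟨j, -, rfl⟩ := mem_image.1 hm; exact hmem j, rfl⟩
  · exact mem_strictTuples.2 ⟨fun j => (mem_powersetCard.1 hS).1 (orderEmbOfFin_mem _ _ j),
      (S.orderEmbOfFin _).strictMono⟩
  · exact (orderEmbOfFin_unique _ (fun j => mem_image_of_mem f (mem_univ j))
      (mem_strictTuples.1 hf).2).symm
  · exact image_orderEmbOfFin_univ S _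
  · exact (prod_image fun i _ j _ h => (mem_strictTuples.1 hf).2.injective h).symm

def Bterm (k r s m : ℕ) : PowerSeries ℚ := X ^ (r * m ^ 2 + s * m) * dFac m k

theorem Bterm_mul_pow (k r s m n : ℕ) : Bterm (n * k) (n * r) (n * s) m = Bterm k r s m ^ n := by
  simp only [Bterm, dFac, Nat.cast_nonneg, if_true, Int.toNat_natCast, mul_pow, ← pow_mul]
  congr 2 <;> ring

theorem X_pow_dvd_Bterm {s : ℕ} (hs : 1 ≤ s) (k r m : ℕ) : X ^ m ∣ Bterm k r s m :=
  dvd_mul_of_dvd_left (pow_dvd_pow X (by nlinarith)) _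

theorem Bcoeff_eq_coeff_sum_prod_Bterm (a k r s N : ℕ) :
    Bcoeff a k r s N = coeff N (∑ S ∈ powersetCard a (Icc 1 N), ∏ m ∈ S, Bterm k r s m) := by
  have hprod (f : Fin a → ℕ) : X ^ (r * ∑ j, f j ^ 2 + s * ∑ j, f j) * ∏ j, dFac (f j) k =
      ∏ j, Bterm k r s (f j) := by
    simp only [Bterm, prod_mul_distrib, prod_pow_eq_pow_sum, mul_sum, sum_add_distrib]
  simp only [Bcoeff, hprod, ← map_sum, sum_strictTuples_prod]

theorem coeff_sum_prod_Bterm_of_le {s : ℕ} (hs : 1 ≤ s) (a k r : ℕ) {M N : ℕ} (hMN : M ≤ N) :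
    coeff M (∑ S ∈ powersetCard a (Icc 1 M), ∏ m ∈ S, Bterm k r s m) =
      coeff M (∑ S ∈ powersetCard a (Icc 1 N), ∏ m ∈ S, Bterm k r s m) := by
  rw [map_sum, map_sum]
  refine sum_subset (powersetCard_mono (Icc_subset_Icc_right hMN)) fun S hSN hSM => ?_
  obtain ⟨hSsub, hScard⟩ := mem_powersetCard.1 hSN
  obtain ⟨m, hmS, hmM⟩ := not_subset.1 fun h => hSM (mem_powersetCard.2 ⟨h, hScard⟩)
  have hMm : M + 1 ≤ m := by
    have := hSsub hmS
    simp only [mem_Icc] at this hmM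
    omega
  exact X_pow_dvd_iff.1 ((pow_dvd_pow X hMm).trans
    ((X_pow_dvd_Bterm hs k r m).trans (dvd_prod_of_mem _ hmS))) M M.lt_succ_self

theorem Bser_zero (k r s : ℕ) : Bser 0 k r s = 1 := by
  ext N
  rw [Bser, coeff_mk, Bcoeff_eq_coeff_sum_prod_Bterm, powersetCard_zero, sum_singleton,
    prod_empty]

theorem aeval_esymm_Bterm (a k r s N : ℕ) :
    MvPolynomial.aeval (fun m : Icc 1 N => Bterm k r s m) (MvPolynomial.esymm (Icc 1 N) ℚ a) =
      ∑ S ∈ powersetCard a (Icc 1 N), ∏ m ∈ S, Bterm k r s m := by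
  rw [MvPolynomial.aeval_esymm_eq_multiset_esymm, ← esymm_map_val]
  exact congrArg (Multiset.esymm · a) (Multiset.attach_map_val' (Icc 1 N).val (Bterm k r s))

theorem quotient_mk_Bser {s : ℕ} (hs : 1 ≤ s) (a k r N : ℕ) :
    Ideal.Quotient.mk (Ideal.span {X ^ (N + 1)}) (Bser a k r s) =
      Ideal.Quotient.mk (Ideal.span {X ^ (N + 1)})
        (MvPolynomial.aeval (fun m : Icc 1 N => Bterm k r s m)
          (MvPolynomial.esymm (Icc 1 N) ℚ a)) := by
  refine quotient_mk_span_X_pow_eq_iff.2 fun M hM => ?_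
  rw [Bser, coeff_mk, Bcoeff_eq_coeff_sum_prod_Bterm, aeval_esymm_Bterm,
    coeff_sum_prod_Bterm_of_le hs a k r (Nat.lt_succ_iff.1 hM)]

theorem quotient_mk_Bser_one {s : ℕ} (hs : 1 ≤ s) (k r N n : ℕ) :
    Ideal.Quotient.mk (Ideal.span {X ^ (N + 1)})
        (Bser 1 (((n + 1) * k : ℕ) : ℤ) ((n + 1) * r) ((n + 1) * s)) =
      Ideal.Quotient.mk (Ideal.span {X ^ (N + 1)})
        (MvPolynomial.aeval (fun m : Icc 1 N => Bterm k r s m)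
          (MvPolynomial.psum (Icc 1 N) ℚ (n + 1))) := by
  rw [quotient_mk_Bser (le_mul_of_one_le_of_le (Nat.le_add_left 1 n) hs), MvPolynomial.esymm_one,
    MvPolynomial.psum]
  simp only [map_sum, MvPolynomial.aeval_X, map_pow, Bterm_mul_pow]

theorem Bser_succ_mul_eq_sum {s : ℕ} (hs : 1 ≤ s) (k r n : ℕ) :
    Bser (n + 1) k r s * (n + 1) =
      ∑ p ∈ antidiagonal n, Bser p.1 k r s *
        ((-1) ^ p.2 * Bser 1 (((p.2 + 1) * k : ℕ) : ℤ) ((p.2 + 1) * r) ((p.2 + 1) * s)) := by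
  refine eq_of_forall_quotient_mk_span_X_pow_eq fun N => ?_
  have h := congrArg ((Ideal.Quotient.mk (Ideal.span {X ^ (N + 1)})).comp
    (MvPolynomial.aeval (fun m : Icc 1 N => Bterm k r s m)).toRingHom)
    (MvPolynomial.esymm_succ_mul_eq_sum (Icc 1 N) ℚ n)
  simp only [RingHom.comp_apply, AlgHom.toRingHom_eq_coe, RingHom.coe_coe, map_mul, map_sum,
    map_add, map_natCast, map_one, map_pow, map_neg] at h ⊢
  simpa only [← quotient_mk_Bser hs, ← quotient_mk_Bser_one hs] using h

def Blog (k r s : ℕ) : PowerSeries (PowerSeries ℚ) :=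
  PowerSeries.mk fun n =>
    if n = 0 then 0 else ((-1 : ℚ) ^ (n + 1) / n) • Bser 1 ((n * k : ℕ) : ℤ) (n * r) (n * s)

def Bgen (k r s : ℕ) : PowerSeries (PowerSeries ℚ) := PowerSeries.mk fun j => Bser j (k : ℤ) r s

theorem constantCoeff_Blog (k r s : ℕ) : constantCoeff (Blog k r s) = 0 := by
  rw [← coeff_zero_eq_constantCoeff_apply, Blog, coeff_mk, if_pos rfl]

theorem coeff_derivative_Blog (k r s n : ℕ) :
    coeff n (d⁄dX _ (Blog k r s)) =
      (-1) ^ n * Bser 1 (((n + 1) * k : ℕ) : ℤ) ((n + 1) * r) ((n + 1) * s) := by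
  have hc : (-1 : ℚ) ^ (n + 1 + 1) / ((n + 1 : ℕ) : ℚ) * (n + 1) = (-1) ^ n := by
    field_simp
    push_cast
    ring
  rw [coeff_derivative, Blog, coeff_mk, if_neg n.succ_ne_zero, Algebra.smul_def,
    show ((n : PowerSeries ℚ) + 1) = algebraMap ℚ _ (n + 1) by simp, mul_right_comm, ← map_mul,
    hc, map_pow, map_neg, map_one]

theorem constantCoeff_Bgen (k r s : ℕ) : constantCoeff (Bgen k r s) = 1 := by
  rw [← coeff_zero_eq_constantCoeff_apply, Bgen, coeff_mk, Bser_zero]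

theorem derivative_Bgen {s : ℕ} (hs : 1 ≤ s) (k r : ℕ) :
    d⁄dX _ (Bgen k r s) = Bgen k r s * d⁄dX _ (Blog k r s) := by
  refine PowerSeries.ext fun n => ?_
  rw [coeff_derivative, coeff_mul, Bgen, coeff_mk, Bser_succ_mul_eq_sum hs]
  simp only [coeff_mk, coeff_derivative_Blog]

section EvalDegLE

variable {σ R A : Type*} [CommSemiring R] [CommSemiring A] [Algebra R A] (v : σ → A)

variable (R) in
def evalDegLE (j : ℕ) : Submodule R A :=
  (MvPolynomial.restrictTotalDegree σ R j).map (MvPolynomial.aeval v).toLinearMap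

theorem mem_evalDegLE {j : ℕ} {x : A} :
    x ∈ evalDegLE R v j ↔
      ∃ Q : MvPolynomial σ R, Q.totalDegree ≤ j ∧ MvPolynomial.aeval v Q = x := by
  simp [evalDegLE, MvPolynomial.mem_restrictTotalDegree]

theorem evalDegLE_mono : Monotone (evalDegLE R v) := fun _ _ hij =>
  Submodule.map_mono fun Q hQ => by
    rw [MvPolynomial.mem_restrictTotalDegree] at hQ ⊢
    exact hQ.trans hij

theorem one_mem_evalDegLE : (1 : A) ∈ evalDegLE R v 0 :=
  (mem_evalDegLE v).2 ⟨1, by simp, map_one _⟩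

theorem apply_mem_evalDegLE_one (i : σ) : v i ∈ evalDegLE R v 1 :=
  (mem_evalDegLE v).2 ⟨MvPolynomial.X i,
    (MvPolynomial.totalDegree_monomial_le _ _).trans (by simp), MvPolynomial.aeval_X v i⟩

theorem mul_mem_evalDegLE {i j : ℕ} {x y : A} (hx : x ∈ evalDegLE R v i)
    (hy : y ∈ evalDegLE R v j) : x * y ∈ evalDegLE R v (i + j) := by
  obtain ⟨P, hP, rfl⟩ := (mem_evalDegLE v).1 hx
  obtain ⟨Q, hQ, rfl⟩ := (mem_evalDegLE v).1 hy
  exact (mem_evalDegLE v).2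
    ⟨P * Q, (MvPolynomial.totalDegree_mul P Q).trans (add_le_add hP hQ), map_mul _ P Q⟩

end EvalDegLE

theorem Bser_mem_evalDegLE {s : ℕ} (hs : 1 ≤ s) (k r : ℕ) {a j : ℕ} (hj : j ≤ a) :
    Bser j k r s ∈ evalDegLE ℚ (fun i : Fin a =>
      Bser 1 ((((i : ℕ) + 1) * k : ℕ) : ℤ) (((i : ℕ) + 1) * r) (((i : ℕ) + 1) * s)) j := by
  induction j using Nat.strong_induction_on with
  | _ j ih =>
    cases j with
    | zero => exact Bser_zero k r s ▸ one_mem_evalDegLE _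
    | succ n =>
      have hB : Bser (n + 1) k r s = ((n + 1 : ℚ))⁻¹ • (Bser (n + 1) k r s * (n + 1)) := by
        rw [show ((n : PowerSeries ℚ) + 1) = algebraMap ℚ _ (n + 1) by simp, mul_comm,
          ← Algebra.smul_def, inv_smul_smul₀ (by positivity)]
      rw [hB, Bser_succ_mul_eq_sum hs]
      refine Submodule.smul_mem _ _ (Submodule.sum_mem _ fun p hp => ?_)
      rw [HasAntidiagonal.mem_antidiagonal] at hp
      refine evalDegLE_mono _ (by omega : p.1 + 1 ≤ n + 1)
        (mul_mem_evalDegLE _ (ih p.1 (by omega) (by omega)) ?_)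
      rw [show ((-1) ^ p.2 : PowerSeries ℚ) = algebraMap ℚ _ ((-1) ^ p.2) by simp,
        ← Algebra.smul_def]
      exact Submodule.smul_mem _ _ (apply_mem_evalDegLE_one _ (⟨p.2, by omega⟩ : Fin a))

theorem B_exp_identity_general (k r s : ℕ) (hs : 1 ≤ s) :
    expX (PowerSeries.mk fun n =>
        if n = 0 then 0 else
          ((-1 : ℚ) ^ (n + 1) / n) • Bser 1 ((n * k : ℕ) : ℤ) (n * r) (n * s)) =
      PowerSeries.mk (fun j => Bser j (k : ℤ) r s) ∧
    ∀ a : ℕ, 1 ≤ a → ∃ Q : MvPolynomial (Fin a) ℚ,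
      Q.totalDegree ≤ a ∧
      Bser a (k : ℤ) r s =
        MvPolynomial.aeval
          (fun i : Fin a =>
            Bser 1 ((((i : ℕ) + 1) * k : ℕ) : ℤ) (((i : ℕ) + 1) * r) (((i : ℕ) + 1) * s)) Q := by
  refine ⟨(eq_expX_of_derivative_eq (constantCoeff_Blog k r s) (derivative_Bgen hs k r)
    (constantCoeff_Bgen k r s)).symm, fun a _ => ?_⟩
  obtain ⟨Q, hQ, hQB⟩ := (mem_evalDegLE _).1 (Bser_mem_evalDegLE hs k r le_rfl)
  exact ⟨Q, hQ, hQB.symm⟩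

/-- Proposition 4.1 and its proof.  For `k, r, s ∈ ℕ` (positive), in
`ℚ⟦q⟧⟦X⟧`:
`exp(Σ_{n≥1} ((-1)^{n+1}/n) ℬ_{1,nk,nr,ns}(q) Xⁿ) = Σ_{j≥0} ℬ_{j,k,r,s}(q) X^j`
(with `ℬ_{0,k,r,s} = 1`).  In particular each `ℬ_{a,k,r,s}` is a polynomial of degree at
most `a` with rational coefficients in the series `ℬ_{1,nk,nr,ns}`, `1 ≤ n ≤ a`. -/
theorem B_exp_identity (k r s : ℕ) (hk : 1 ≤ k) (hr : 1 ≤ r) (hs : 1 ≤ s) :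
    expX (PowerSeries.mk fun n =>
        if n = 0 then 0 else
          ((-1 : ℚ) ^ (n + 1) / n) • Bser 1 ((n * k : ℕ) : ℤ) (n * r) (n * s)) =
      PowerSeries.mk (fun j => Bser j (k : ℤ) r s) ∧
    ∀ a : ℕ, 1 ≤ a → ∃ Q : MvPolynomial (Fin a) ℚ,
      Q.totalDegree ≤ a ∧
      Bser a (k : ℤ) r s =
        MvPolynomial.aeval
          (fun i : Fin a =>
            Bser 1 ((((i : ℕ) + 1) * k : ℕ) : ℤ) (((i : ℕ) + 1) * r) (((i : ℕ) + 1) * s)) Q :=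
  B_exp_identity_general k r s hs
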